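/- Let Z be a real random variable with the standard normal distribution N(0,1). Then for every b ∈ ℝ and every u ∈ [0,1], P( 1 − |Φ(Z + b) − Φ(−Z)| ≤ u ) = u; that is, the FAB p-value p(Z,b) is uniformly distributed on (0,1) under the null hypothesis. -/

import Mathlib

open MeasureTheory ProbabilityTheory

/-- Φ, the standard normal cumulative distribution function. -/
noncomputable def Phi : ℝ → ℝ := fun x => ProbabilityTheory.cdf (gaussianReal 0 1) x

/-!
Write `W(z) = Φ(z + b) - Φ(-z) = Φ(z + b) + Φ(z) - 1`. It is a continuous increasing bijection
`ℝ → (-1, 1)` with `W(-z - b) = -W(z)`, so for `c ∈ (0, 1)` the event `|W(Z)| < c` is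
`-a - b < Z < a`, where `W(a) = c`; its probability is `Φ(a) - Φ(-a - b) = W(a) = c`.
Thus `|W(Z)|` is uniform on `(0, 1)`, and so is `p(Z, b) = 1 - |W(Z)|`.
-/

open Set Filter

namespace ProbabilityTheory

variable {μ : Measure ℝ} [IsProbabilityMeasure μ]

lemma measure_Ioc_eq_ofReal_cdf_sub (x y : ℝ) :
    μ (Ioc x y) = ENNReal.ofReal (cdf μ y - cdf μ x) := by
  conv_lhs => rw [← measure_cdf μ]
  exact (cdf μ).measure_Ioc x y

lemma measure_Ioo_eq_ofReal_cdf_sub [NullSingletonClass μ] (x y : ℝ) :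
    μ (Ioo x y) = ENNReal.ofReal (cdf μ y - cdf μ x) := by
  rw [measure_congr Ioo_ae_eq_Ioc, measure_Ioc_eq_ofReal_cdf_sub]

lemma strictMono_cdf (h : volume ≪ μ) : StrictMono (cdf μ) := fun x y hxy => by
  have hpos : μ (Ioc x y) ≠ 0 := fun h0 => hxy.not_ge (by simpa using h h0)
  rw [measure_Ioc_eq_ofReal_cdf_sub, Ne, ENNReal.ofReal_eq_zero, not_le, sub_pos] at hpos
  exact hpos

lemma continuous_cdf [NullSingletonClass μ] : Continuous (cdf μ) := by
  refine continuous_iff_continuousAt.2 fun x => ?_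
  rw [(monotone_cdf μ).continuousAt_iff_leftLim_eq_rightLim, (cdf μ).rightLim_eq]
  have hx := measure_singleton (μ := μ) x
  conv_lhs at hx => rw [← measure_cdf μ]
  rw [StieltjesFunction.measure_singleton, ENNReal.ofReal_eq_zero, sub_nonpos] at hx
  exact le_antisymm ((monotone_cdf μ).leftLim_le le_rfl) hx

lemma cdf_neg [NullSingletonClass μ] (h : μ.map (fun x ↦ -x) = μ) (x : ℝ) :
    cdf μ (-x) = 1 - cdf μ x := by
  have hIci : μ.real (Ici x) = μ.real (Iic (-x)) := by
    conv_rhs => rw [← h]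
    rw [map_measureReal_apply measurable_neg measurableSet_Iic]
    congr 1
    ext y
    simp
  rw [cdf_eq_real, cdf_eq_real, ← hIci, measureReal_congr Ioi_ae_eq_Ici.symm, ← compl_Iic,
    probReal_compl_eq_one_sub measurableSet_Iic]

end ProbabilityTheory

instance : NullSingletonClass (gaussianReal 0 1) := nullSingletonClass_gaussianReal one_ne_zero

lemma strictMono_Phi : StrictMono Phi :=
  strictMono_cdf (gaussianReal_absolutelyContinuous' 0 one_ne_zero)

@[fun_prop]
lemma continuous_Phi : Continuous Phi := continuous_cdf

lemma Phi_neg (x : ℝ) : Phi (-x) = 1 - Phi x :=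
  cdf_neg (by simpa using gaussianReal_map_neg (μ := 0) (v := 1)) x

lemma Phi_pos (x : ℝ) : 0 < Phi x :=
  (cdf_nonneg _ (x - 1)).trans_lt (strictMono_Phi (sub_one_lt x))

lemma Phi_lt_one (x : ℝ) : Phi x < 1 :=
  (strictMono_Phi (lt_add_one x)).trans_le (cdf_le_one _ (x + 1))

/-- `p(z, b) = 1 - |fabStat b z|` is the FAB p-value. -/
noncomputable def fabStat (b z : ℝ) : ℝ := Phi (z + b) - Phi (-z)

section FabStat

variable (b : ℝ)

lemma fabStat_eq (z : ℝ) : fabStat b z = Phi (z + b) + Phi z - 1 := by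
  rw [fabStat, Phi_neg]
  ring

lemma strictMono_fabStat : StrictMono (fabStat b) := fun x y hxy => by
  have := strictMono_Phi (by linarith : x + b < y + b)
  have := strictMono_Phi hxy
  rw [fabStat_eq, fabStat_eq]
  linarith

lemma continuous_fabStat : Continuous (fabStat b) := by
  unfold fabStat
  fun_prop

lemma fabStat_neg_sub (z : ℝ) : fabStat b (-z - b) = -fabStat b z := by
  rw [fabStat, fabStat, sub_add_cancel, show -(-z - b) = z + b by ring, neg_sub]

lemma abs_fabStat_lt_one (z : ℝ) : |fabStat b z| < 1 := by
  rw [fabStat, abs_sub_lt_iff]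
  constructor <;> linarith [Phi_pos (z + b), Phi_lt_one (z + b), Phi_pos (-z), Phi_lt_one (-z)]

lemma exists_fabStat_eq {c : ℝ} (hc : c ∈ Ioo (-1) 1) : ∃ a, fabStat b a = c := by
  have hPhiTop : Tendsto Phi atTop (nhds 1) := tendsto_cdf_atTop _
  have hPhiBot : Tendsto Phi atBot (nhds 0) := tendsto_cdf_atBot _
  have hTop : Tendsto (fabStat b) atTop (nhds 1) := by
    simpa [funext (fabStat_eq b)] using
      ((hPhiTop.comp (tendsto_atTop_add_const_right _ b tendsto_id)).add hPhiTop).sub_const 1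
  have hBot : Tendsto (fabStat b) atBot (nhds (-1)) := by
    simpa [funext (fabStat_eq b)] using
      ((hPhiBot.comp (tendsto_atBot_add_const_right _ b tendsto_id)).add hPhiBot).sub_const 1
  exact mem_range_of_exists_le_of_exists_ge (continuous_fabStat b)
    (hBot.eventually (eventually_le_nhds hc.1)).exists
    (hTop.eventually (eventually_ge_nhds hc.2)).exists

lemma setOf_abs_fabStat_lt {a c : ℝ} (ha : fabStat b a = c) :
    {z | |fabStat b z| < c} = Ioo (-a - b) a := by
  ext z
  rw [mem_ofPred_eq, abs_lt, ← ha, ← fabStat_neg_sub, (strictMono_fabStat b).lt_iff_lt,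
    (strictMono_fabStat b).lt_iff_lt, mem_Ioo]

lemma gaussianReal_abs_fabStat_lt {c : ℝ} (hc : c ∈ Icc 0 1) :
    gaussianReal 0 1 {z | |fabStat b z| < c} = ENNReal.ofReal c := by
  obtain rfl | hc0 := hc.1.eq_or_lt
  · simp [(abs_nonneg _).not_gt]
  obtain rfl | hc1 := hc.2.eq_or_lt
  · simp [abs_fabStat_lt_one]
  obtain ⟨a, ha⟩ := exists_fabStat_eq b ⟨by linarith, hc1⟩
  rw [setOf_abs_fabStat_lt b ha, measure_Ioo_eq_ofReal_cdf_sub, ← ha, fabStat_eq]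
  congr 1
  change Phi a - Phi (-a - b) = _
  rw [← neg_add', Phi_neg]
  ring

end FabStat

theorem stmt_12 {Ω : Type*} [MeasurableSpace Ω] (P : Measure Ω) [IsProbabilityMeasure P]
    (Z : Ω → ℝ) (hZ : P.map Z = gaussianReal 0 1) (b : ℝ) (u : ℝ) (hu : u ∈ Set.Icc (0 : ℝ) 1) :
    P {ω | 1 - |Phi (Z ω + b) - Phi (-Z ω)| ≤ u} = ENNReal.ofReal u := by
  have hZm : AEMeasurable Z P := aemeasurable_of_map_neZero (by rw [hZ]; infer_instance)
  set S := {z | |fabStat b z| < 1 - u}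
  have hS : MeasurableSet S :=
    measurableSet_lt (continuous_fabStat b).abs.measurable measurable_const
  have hpre : {ω | 1 - |Phi (Z ω + b) - Phi (-Z ω)| ≤ u} = Z ⁻¹' Sᶜ := by
    ext ω
    exact sub_le_comm.trans (not_lt (α := ℝ)).symm
  rw [hpre, ← Measure.map_apply_of_aemeasurable hZm hS.compl, hZ, prob_compl_eq_one_sub hS,
    gaussianReal_abs_fabStat_lt b ⟨by linarith [hu.2], by linarith [hu.1]⟩, ← ENNReal.ofReal_one,
    ← ENNReal.ofReal_sub _ (sub_nonneg.2 hu.2), sub_sub_cancel]
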